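/- Monotonicity of successful runs: if the run from initial state (t, ⟨·⟩, ε, •^k, ↓) terminates in n steps in a bound-success final state (t, ⟨·⟩, L, •^m · p · •^j, ↑), then for every h > k the run from (t, ⟨·⟩, ε, •^h, ↓) also terminates in exactly n steps, in the state (t, ⟨·⟩, L, •^m · p · •^{j+(h-k)}, ↑). -/
import Mathlib


/-! λ-terms, contexts, and the λ-IAM of Accattoli, Dal Lago, Vanoni. -/

inductive Term : Type
  | var : ℕ → Term
  | lam : ℕ → Term → Term
  | app : Term → Term → Term
deriving DecidableEq

inductive Ctx : Type
  | hole : Ctx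
  | lam : ℕ → Ctx → Ctx
  | appL : Ctx → Term → Ctx
  | appR : Term → Ctx → Ctx
deriving DecidableEq

/-- Plugging a term in a context (capture allowed). -/
def Ctx.plug : Ctx → Term → Term
  | .hole, t => t
  | .lam x C, t => .lam x (C.plug t)
  | .appL C u, t => .app (C.plug t) u
  | .appR u C, t => .app u (C.plug t)

/-- Plugging a context in a context. -/
def Ctx.comp : Ctx → Ctx → Ctx
  | .hole, D => D
  | .lam x C, D => .lam x (C.comp D)
  | .appL C u, D => .appL (C.comp D) u
  | .appR u C, D => .appR u (C.comp D)

/-- The level of a context: the number of applications whose right subterm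
contains the hole. -/
def Ctx.level : Ctx → ℕ
  | .hole => 0
  | .lam _ C => C.level
  | .appL C _ => C.level
  | .appR _ C => C.level + 1

/-- Logged positions: a position together with a log (a list of logged
positions). -/
inductive LPos : Type
  | mk : Term → Ctx → List LPos → LPos

/-- Tape entries: the symbol `•` or a logged position. -/
inductive TEnt : Type
  | bullet : TEnt
  | pos : LPos → TEnt

abbrev Tape := List TEnt
abbrev Log := List LPos

def TEnt.isPos : TEnt → Bool
  | .bullet => false
  | .pos _ => true

inductive Dir : Type
  | down
  | up
deriving DecidableEq

def Dir.flip : Dir → Dir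
  | .down => .up
  | .up => .down

/-- λ-IAM states. -/
structure State : Type where
  tm : Term
  ctx : Ctx
  log : Log
  tape : Tape
  dir : Dir

/-- The eight transitions of the λ-IAM (Figure 2). -/
inductive Step : State → State → Prop
  | bul1 : ∀ (t u : Term) (C : Ctx) (L : Log) (T : Tape),
      Step ⟨.app t u, C, L, T, .down⟩
           ⟨t, C.comp (.appL .hole u), L, .bullet :: T, .down⟩
  | bul2 : ∀ (x : ℕ) (t : Term) (C : Ctx) (L : Log) (T : Tape),
      Step ⟨.lam x t, C, L, .bullet :: T, .down⟩
           ⟨t, C.comp (.lam x .hole), L, T, .down⟩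
  | tvar : ∀ (x : ℕ) (C D : Ctx) (Ln L : Log) (T : Tape), Ln.length = D.level →
      Step ⟨.var x, C.comp (.lam x D), Ln ++ L, T, .down⟩
           ⟨.lam x (D.plug (.var x)), C, L, .pos (.mk (.var x) (.lam x D) Ln) :: T, .up⟩
  | bt2 : ∀ (x : ℕ) (C D : Ctx) (Ln L : Log) (T : Tape), Ln.length = D.level →
      Step ⟨.lam x (D.plug (.var x)), C, L, .pos (.mk (.var x) (.lam x D) Ln) :: T, .down⟩
           ⟨.var x, C.comp (.lam x D), Ln ++ L, T, .up⟩
  | bul3 : ∀ (t u : Term) (C : Ctx) (L : Log) (T : Tape),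
      Step ⟨u, C.comp (.appL .hole t), L, .bullet :: T, .up⟩
           ⟨.app u t, C, L, T, .up⟩
  | bul4 : ∀ (x : ℕ) (t : Term) (C : Ctx) (L : Log) (T : Tape),
      Step ⟨t, C.comp (.lam x .hole), L, T, .up⟩
           ⟨.lam x t, C, L, .bullet :: T, .up⟩
  | arg : ∀ (t u : Term) (C : Ctx) (L : Log) (T : Tape) (p : LPos),
      Step ⟨u, C.comp (.appL .hole t), L, .pos p :: T, .up⟩
           ⟨t, C.comp (.appR u .hole), p :: L, T, .down⟩
  | bt1 : ∀ (t u : Term) (C : Ctx) (L : Log) (T : Tape) (p : LPos),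
      Step ⟨t, C.comp (.appR u .hole), p :: L, T, .up⟩
           ⟨u, C.comp (.appL .hole t), L, .pos p :: T, .down⟩

/-- Final states: no transition applies. -/
def Final (s : State) : Prop := ¬ ∃ s', Step s s'

/-- `n` transitions. -/
def StepN : ℕ → State → State → Prop
  | 0, s, s' => s = s'
  | n + 1, s, s'' => ∃ s', Step s s' ∧ StepN n s' s''

/-- Reachability in any number of transitions. -/
def Reaches : State → State → Prop := Relation.ReflTransGen Step

/-- A tape made of `k` occurrences of `•`. -/
def bulls (k : ℕ) : Tape := List.replicate k .bullet

/-- The initial state of code `t` and depth `k`. -/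
def initState (t : Term) (k : ℕ) : State := ⟨t, .hole, [], bulls k, .down⟩


lemma step_ext {s s' : State} (E : Tape) (h : Step s s') :
    Step ⟨s.tm, s.ctx, s.log, s.tape ++ E, s.dir⟩
         ⟨s'.tm, s'.ctx, s'.log, s'.tape ++ E, s'.dir⟩ := by
  cases h <;> simp only [List.cons_append] <;> constructor <;> assumption

lemma stepN_ext {n : ℕ} {s s' : State} (E : Tape) (h : StepN n s s') :
    StepN n ⟨s.tm, s.ctx, s.log, s.tape ++ E, s.dir⟩
            ⟨s'.tm, s'.ctx, s'.log, s'.tape ++ E, s'.dir⟩ := by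
  induction n generalizing s with
  | zero => cases h; rfl
  | succ n ih =>
    obtain ⟨s₁, h1, h2⟩ := h
    exact ⟨_, step_ext E h1, ih h2⟩

lemma final_ext (tm : Term) (ctx : Ctx) (log : Log) (dir : Dir)
    (T E : Tape) (hT : T ≠ []) (hfin : Final ⟨tm, ctx, log, T, dir⟩) :
    Final ⟨tm, ctx, log, T ++ E, dir⟩ := by
  obtain ⟨a, T0, rfl⟩ := List.exists_cons_of_ne_nil hT
  rintro ⟨s', h⟩
  apply hfin
  simp only [List.cons_append] at h
  cases h <;> exact ⟨_, by constructor <;> assumption⟩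

/-- monotonicity of successful runs: a bound-success run at
depth `k` yields, for every `h > k`, a bound-success run of the same length
with the extra `•`s appended. -/
theorem bound_success_monotone (t : Term) (k n m j : ℕ) (p : LPos) (L : Log)
    (hrun : StepN n (initState t k)
      ⟨t, .hole, L, bulls m ++ TEnt.pos p :: bulls j, .up⟩)
    (hfin : Final ⟨t, .hole, L, bulls m ++ TEnt.pos p :: bulls j, .up⟩) :
    ∀ h : ℕ, k < h →
      StepN n (initState t h)
        ⟨t, .hole, L, bulls m ++ TEnt.pos p :: bulls (j + (h - k)), .up⟩ ∧
      Final ⟨t, .hole, L, bulls m ++ TEnt.pos p :: bulls (j + (h - k)), .up⟩ := by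
  intro h hkh
  set E : Tape := bulls (h - k) with hE
  have hbulls : bulls h = bulls k ++ E := by
    simp only [hE, bulls, ← List.replicate_add]
    congr 1
    omega
  have htape : (bulls m ++ TEnt.pos p :: bulls j) ++ E
      = bulls m ++ TEnt.pos p :: bulls (j + (h - k)) := by
    simp [hE, bulls, List.append_assoc, ← List.replicate_add]
  have hne : bulls m ++ TEnt.pos p :: bulls j ≠ [] := by
    cases m <;> simp [bulls]
  constructor
  · have := stepN_ext E hrun
    simpa [initState, ← hbulls, htape] using this
  · have := final_ext t .hole L .up _ E hne hfin
    rwa [htape] at this
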